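/- Let G be a group, V a subgroup of G of finite index, φ a surjective group homomorphism from V onto the infinite cyclic group ℤ, and F the kernel of φ (regarded as a subgroup of G). Let U be a subgroup of G such that U ∩ F has finite index in F while U ∩ F has infinite index in U. Then U has finite index in G. -/

import Mathlib

open Subgroup Pointwise

/-- Second-isomorphism-style index fact: if `N` is normal and `H ⊓ N` has finite
index in `N`, then `H` has finite index in `H ⊔ N`. -/
theorem aux_relindex_sup {G : Type*} [Group G] (H N : Subgroup G) [N.Normal]
    (hfin : (H ⊓ N).relIndex N ≠ 0) : H.relIndex (H ⊔ N) ≠ 0 := by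
  have h1 : Finite (N ⧸ (H ⊓ N).subgroupOf N) := by
    have := hfin
    rw [relIndex] at this
    exact (Nat.card_ne_zero.mp this).2
  -- build a surjection from N ⧸ (H⊓N).subgroupOf N onto (H⊔N) ⧸ H.subgroupOf (H⊔N)
  let f : N ⧸ (H ⊓ N).subgroupOf N → (H ⊔ N : Subgroup G) ⧸ H.subgroupOf (H ⊔ N) :=
    Quotient.map' (fun n => ⟨n.1, Subgroup.mem_sup_right n.2⟩)
      (by
        intro a b hab
        rw [QuotientGroup.leftRel_apply] at hab ⊢
        exact hab.1)
  have hsurj : Function.Surjective f := by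
    intro x
    induction x using QuotientGroup.induction_on with
    | H x =>
      obtain ⟨x, hx⟩ := x
      have hx2 : x ∈ ((N : Set G) * (H : Set G)) := by
        rw [← Subgroup.normal_mul]
        rw [sup_comm] at hx
        exact hx
      obtain ⟨n, hn, h, hh, rfl⟩ := hx2
      refine ⟨QuotientGroup.mk ⟨n, hn⟩, ?_⟩
      show QuotientGroup.mk _ = _
      rw [QuotientGroup.eq]
      show (⟨n, _⟩ : (H ⊔ N : Subgroup G))⁻¹ * ⟨n * h, hx⟩ ∈ H.subgroupOf (H ⊔ N)
      show (n)⁻¹ * (n * h) ∈ H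
      simpa using hh
  have h2 : Finite ((H ⊔ N : Subgroup G) ⧸ H.subgroupOf (H ⊔ N)) :=
    Finite.of_surjective f hsurj
  rw [relIndex]
  exact Subgroup.index_ne_zero_of_finite

/-- Any nontrivial subgroup of `Multiplicative ℤ` has finite index. -/
theorem aux_int_index {H : Subgroup (Multiplicative ℤ)} (hH : H ≠ ⊥) : H.index ≠ 0 := by
  obtain ⟨x, hx1⟩ := Subgroup.ne_bot_iff_exists_ne_one.mp hH
  have hzle : Subgroup.zpowers (x : Multiplicative ℤ) ≤ H := by
    rw [Subgroup.zpowers_le]; exact x.2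
  have hz : (Subgroup.zpowers (x : Multiplicative ℤ)).index ≠ 0 := by
    have hEq : Subgroup.zpowers (x : Multiplicative ℤ) =
        AddSubgroup.toSubgroup (AddSubgroup.zmultiples ((x : Multiplicative ℤ).toAdd)) := by
      ext y
      simp [Subgroup.mem_zpowers_iff, AddSubgroup.mem_zmultiples_iff]
      constructor
      · rintro ⟨k, rfl⟩; exact ⟨k, rfl⟩
      · rintro ⟨k, hk⟩; exact ⟨k, by simpa [← ofAdd_zsmul] using congrArg Multiplicative.ofAdd hk⟩
    rw [hEq, AddSubgroup.index_toSubgroup, Int.index_zmultiples]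
    simp only [ne_eq, Int.natAbs_eq_zero]
    intro h
    apply hx1
    ext
    simpa using h
  exact fun h => hz (Nat.eq_zero_of_zero_dvd (h ▸ Subgroup.index_dvd_of_le hzle))

/-- Let `G` be a group, `V` a subgroup of `G` of finite index, `φ` a surjective group
homomorphism from `V` onto the infinite cyclic group `ℤ`, and `F` the kernel of `φ`
(regarded as a subgroup of `G`).  Let `U` be a subgroup of `G` such that `U ∩ F` has
finite index in `F` while `U ∩ F` has infinite index in `U`.  Then `U` has finite
index in `G`.  (In Mathlib, `Subgroup.index`/`Subgroup.relindex` take the value `0`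
exactly when the index is infinite.) -/
theorem stmt0 {G : Type*} [Group G] (V : Subgroup G) (hV : V.index ≠ 0)
    (φ : V →* Multiplicative ℤ) (hφ : Function.Surjective φ)
    (F : Subgroup G) (hF : F = φ.ker.map V.subtype)
    (U : Subgroup G)
    (hfin : (U ⊓ F).relIndex F ≠ 0)
    (hinf : (U ⊓ F).relIndex U = 0) :
    U.index ≠ 0 := by
  subst hF
  haveI : V.FiniteIndex := ⟨hV⟩
  have hFV : φ.ker.map V.subtype ≤ V := map_subtype_le _
  have hker : (φ.ker.map V.subtype).subgroupOf V = φ.ker :=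
    Subgroup.comap_map_eq_self_of_injective V.subtype_injective _
  -- the image of U ∩ V in ℤ is nontrivial
  have hne : (U.subgroupOf V).map φ ≠ ⊥ := by
    intro hbot
    have hle : U.subgroupOf V ≤ φ.ker := (Subgroup.map_eq_bot_iff _).mp hbot
    have hsub : U ⊓ V ≤ U ⊓ φ.ker.map V.subtype := by
      intro x hx
      exact ⟨hx.1, ⟨⟨x, hx.2⟩, hle (by simpa [Subgroup.mem_subgroupOf] using hx.1), rfl⟩⟩
    have heq : U ⊓ φ.ker.map V.subtype = U ⊓ V :=
      le_antisymm (inf_le_inf_left _ hFV) hsub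
    rw [heq, inf_comm, inf_relIndex_right] at hinf
    have hfi : (V.subgroupOf U).index ≠ 0 :=
      (Subgroup.instFiniteIndex_subgroupOf V U).index_ne_zero
    exact hfi hinf
  have h2 : ((U.subgroupOf V).map φ).index ≠ 0 := aux_int_index hne
  have h3 : (U.subgroupOf V ⊔ φ.ker).index ≠ 0 := by
    have hm := Subgroup.index_map (U.subgroupOf V) φ
    rw [φ.range_eq_top_of_surjective hφ, index_top, mul_one] at hm
    rw [← hm]; exact h2
  have h4 : ((U.subgroupOf V) ⊓ φ.ker).relIndex φ.ker ≠ 0 := by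
    have ht := Subgroup.relIndex_subgroupOf (H := U ⊓ φ.ker.map V.subtype)
      (K := φ.ker.map V.subtype) (L := V) hFV
    have hi : (U ⊓ φ.ker.map V.subtype).subgroupOf V = U.subgroupOf V ⊓ φ.ker := by
      rw [← hker]; ext x; simp [Subgroup.mem_subgroupOf]
    rw [hi, hker] at ht
    rw [ht]; exact hfin
  have h5 : (U.subgroupOf V).relIndex (U.subgroupOf V ⊔ φ.ker) ≠ 0 :=
    aux_relindex_sup _ _ h4
  have h6 : (U.subgroupOf V).index ≠ 0 := by
    rw [← Subgroup.relIndex_mul_index (le_sup_left : U.subgroupOf V ≤ U.subgroupOf V ⊔ φ.ker)]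
    exact Nat.mul_ne_zero h5 h3
  have h7 : (U ⊓ V).index ≠ 0 := by
    rw [← Subgroup.relIndex_mul_index (inf_le_right : U ⊓ V ≤ V), inf_relIndex_right]
    exact Nat.mul_ne_zero h6 hV
  exact ne_zero_of_dvd_ne_zero h7 (Subgroup.index_dvd_of_le inf_le_left)
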